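/- arXiv:2411.13234 — 3 statements merged into one kernel-verified Lean document; each statement's English description precedes it below -/
import Mathlib

section
/- The function β^r(x,t) = (a/2)[e^{β̂(ω)x} sin(ωt + β̄(ω)x) + e^{−β̂(ω)x} sin(ωt − β̄(ω)x)], with β̄(ω) = ω√((√(1+ω²d²)+1)/(2(1+ω²d²))) and β̂(ω) = ω√((√(1+ω²d²)−1)/(2(1+ω²d²))), satisfies the wave equation with Kelvin–Voigt damping ∂_{tt}β = ∂_{xx}β + d∂_{xxt}β, with ∂_x β(0,t) = 0 and β(0,t) = a sin(ωt). -/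
/-!
Writing `λ = β̂ + iβ̄`, the signal is `βʳ(x,t) = a · Im (e^{iωt} cosh (λx)) = Re (-ia e^{iωt} cosh (λx))`.
Each space derivative of `e^{iωt} cosh (λx)` multiplies it by `λ` (swapping `cosh` and `sinh`) and
each time derivative by `iω`, so the damped wave equation reduces to the algebraic relation
`λ² (1 + iωd) = -ω²`, whose real and imaginary parts are the identities
`β̄² - β̂² = ω²/(1+ω²d²)` and `2β̄β̂ = ω³d/(1+ω²d²)`.
The boundary conditions come from `cosh 0 = 1` and `sinh 0 = 0`.
-/

open Real Set
open Complex (I)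

namespace KelvinVoigt

noncomputable def betaBar (ω d : ℝ) : ℝ :=
  ω * √((√(1 + ω ^ 2 * d ^ 2) + 1) / (2 * (1 + ω ^ 2 * d ^ 2)))

noncomputable def betaHat (ω d : ℝ) : ℝ :=
  ω * √((√(1 + ω ^ 2 * d ^ 2) - 1) / (2 * (1 + ω ^ 2 * d ^ 2)))

theorem one_le_sqrt_one_add_sq_mul_sq (ω d : ℝ) : 1 ≤ √(1 + ω ^ 2 * d ^ 2) :=
  Real.one_le_sqrt.2 (le_add_of_nonneg_right (by positivity))

theorem betaBar_sq_sub_betaHat_sq (ω d : ℝ) :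
    betaBar ω d ^ 2 - betaHat ω d ^ 2 = ω ^ 2 / (1 + ω ^ 2 * d ^ 2) := by
  have hs := one_le_sqrt_one_add_sq_mul_sq ω d
  rw [betaBar, betaHat, mul_pow, mul_pow, Real.sq_sqrt (by positivity),
    Real.sq_sqrt (div_nonneg (by linarith) (by positivity))]
  field_simp
  ring

theorem two_mul_betaBar_mul_betaHat {ω d : ℝ} (hωd : 0 ≤ ω * d) :
    2 * betaBar ω d * betaHat ω d = ω ^ 3 * d / (1 + ω ^ 2 * d ^ 2) := by
  have hs := one_le_sqrt_one_add_sq_mul_sq ω d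
  have hprod : (√(1 + ω ^ 2 * d ^ 2) + 1) / (2 * (1 + ω ^ 2 * d ^ 2)) *
      ((√(1 + ω ^ 2 * d ^ 2) - 1) / (2 * (1 + ω ^ 2 * d ^ 2))) =
      (ω * d / (2 * (1 + ω ^ 2 * d ^ 2))) ^ 2 := by
    have hsq := Real.sq_sqrt (by positivity : (0 : ℝ) ≤ 1 + ω ^ 2 * d ^ 2)
    field_simp
    linear_combination hsq
  calc 2 * betaBar ω d * betaHat ω d
      = 2 * ω ^ 2 * √((ω * d / (2 * (1 + ω ^ 2 * d ^ 2))) ^ 2) := by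
        rw [← hprod, Real.sqrt_mul (by positivity), betaBar, betaHat]
        ring
    _ = ω ^ 3 * d / (1 + ω ^ 2 * d ^ 2) := by
        rw [Real.sqrt_sq (by positivity)]
        field_simp

noncomputable def wavenumber (ω d : ℝ) : ℂ :=
  betaHat ω d + betaBar ω d * I

theorem wavenumber_sq_mul {ω d : ℝ} (hωd : 0 ≤ ω * d) :
    wavenumber ω d ^ 2 * (1 + ω * d * I) = -ω ^ 2 := by
  have hk : (1 + ω ^ 2 * d ^ 2 : ℝ) ≠ 0 := by positivity
  have hA : ((betaBar ω d : ℂ) ^ 2 - betaHat ω d ^ 2) * (1 + ω ^ 2 * d ^ 2) = ω ^ 2 := by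
    exact_mod_cast (eq_div_iff hk).1 (betaBar_sq_sub_betaHat_sq ω d)
  have hB : 2 * (betaBar ω d : ℂ) * betaHat ω d * (1 + ω ^ 2 * d ^ 2) = ω ^ 3 * d := by
    exact_mod_cast (eq_div_iff hk).1 (two_mul_betaBar_mul_betaHat hωd)
  apply mul_right_cancel₀ (b := (1 + ω ^ 2 * d ^ 2 : ℂ)) (by exact_mod_cast hk)
  rw [wavenumber]
  linear_combination (-1 - ω * d * I) * hA + (I + ω * d * I ^ 2) * hB +
    (ω ^ 4 * d ^ 2 + betaBar ω d ^ 2 * (1 + ω * d * I) * (1 + ω ^ 2 * d ^ 2)) * Complex.I_sq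

section Modes

variable (ω : ℝ) (μ : ℂ)

noncomputable def coshMode (c : ℂ) (x t : ℝ) : ℝ :=
  (c * Complex.exp (ω * t * I) * Complex.cosh (μ * x)).re

noncomputable def sinhMode (c : ℂ) (x t : ℝ) : ℝ :=
  (c * Complex.exp (ω * t * I) * Complex.sinh (μ * x)).re

theorem coshMode_eq_exp_mul_sin (a p q x t : ℝ) : coshMode ω (p + q * I) (-(a * I)) x t =
    (a / 2) * (Real.exp (p * x) * Real.sin (ω * t + q * x) +
      Real.exp (-(p * x)) * Real.sin (ω * t - q * x)) := by
  have hre (z : ℂ) : (-(a * I) * Complex.exp z).re = a * (Real.exp z.re * Real.sin z.im) := by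
    simp [Complex.exp_re, Complex.exp_im]
  have hcosh : -(a * I) * Complex.exp (ω * t * I) * Complex.cosh ((p + q * I) * x) =
      (-(a * I) * Complex.exp ((p + q * I) * x + ω * t * I) +
        -(a * I) * Complex.exp (-((p + q * I) * x) + ω * t * I)) / 2 := by
    rw [Complex.cosh, Complex.exp_add, Complex.exp_add]
    ring
  rw [coshMode, hcosh, Complex.div_ofNat_re, Complex.add_re, hre, hre]
  simp only [Complex.add_re, Complex.add_im, Complex.mul_re, Complex.mul_im, Complex.neg_re,
    Complex.neg_im, Complex.ofReal_re, Complex.ofReal_im, Complex.I_re, Complex.I_im]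
  ring_nf

theorem sinhMode_zero (c : ℂ) (t : ℝ) : sinhMode ω μ c 0 t = 0 := by
  simp [sinhMode]

variable {ω μ}

theorem coshMode_add_ofReal_mul (c₁ c₂ : ℂ) (r x t : ℝ) :
    coshMode ω μ c₁ x t + r * coshMode ω μ c₂ x t = coshMode ω μ (c₁ + r * c₂) x t := by
  simp only [coshMode, add_mul, Complex.add_re, mul_assoc, Complex.re_ofReal_mul]

theorem hasDerivAt_coshMode_time (c : ℂ) (x t : ℝ) :
    HasDerivAt (fun τ => coshMode ω μ c x τ) (coshMode ω μ (ω * I * c) x t) t := by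
  have h := ((((hasDerivAt_id (t : ℂ)).const_mul (ω : ℂ)).mul_const I).cexp.const_mul c
    |>.mul_const (Complex.cosh (μ * x))).real_of_complex
  refine h.congr_deriv ?_
  simp only [coshMode, id]
  ring_nf

theorem hasDerivAt_coshMode_space (c : ℂ) (x t : ℝ) :
    HasDerivAt (fun ξ => coshMode ω μ c ξ t) (sinhMode ω μ (μ * c) x t) x := by
  have h := (((hasDerivAt_id (x : ℂ)).const_mul μ).ccosh.const_mul
    (c * Complex.exp (ω * t * I))).real_of_complex
  refine h.congr_deriv ?_
  simp only [sinhMode, id]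
  ring_nf

theorem hasDerivAt_sinhMode_space (c : ℂ) (x t : ℝ) :
    HasDerivAt (fun ξ => sinhMode ω μ c ξ t) (coshMode ω μ (μ * c) x t) x := by
  have h := (((hasDerivAt_id (x : ℂ)).const_mul μ).csinh.const_mul
    (c * Complex.exp (ω * t * I))).real_of_complex
  refine h.congr_deriv ?_
  simp only [coshMode, id]
  ring_nf

theorem deriv_coshMode_time (c : ℂ) (x t : ℝ) :
    deriv (fun τ => coshMode ω μ c x τ) t = coshMode ω μ (ω * I * c) x t :=
  (hasDerivAt_coshMode_time c x t).deriv

theorem deriv_coshMode_space (c : ℂ) (x t : ℝ) :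
    deriv (fun ξ => coshMode ω μ c ξ t) x = sinhMode ω μ (μ * c) x t :=
  (hasDerivAt_coshMode_space c x t).deriv

theorem deriv_sinhMode_space (c : ℂ) (x t : ℝ) :
    deriv (fun ξ => sinhMode ω μ c ξ t) x = coshMode ω μ (μ * c) x t :=
  (hasDerivAt_sinhMode_space c x t).deriv

theorem coshMode_kelvinVoigt {d : ℝ} (hμ : μ ^ 2 * (1 + ω * d * I) = -ω ^ 2)
    (c : ℂ) (x t : ℝ) :
    deriv (fun τ => deriv (fun τ' => coshMode ω μ c x τ') τ) t =
      deriv (fun ξ => deriv (fun ξ' => coshMode ω μ c ξ' t) ξ) x +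
      d * deriv (fun τ => deriv (fun ξ => deriv (fun ξ' => coshMode ω μ c ξ' τ) ξ) x) t := by
  simp only [deriv_coshMode_time, deriv_coshMode_space, deriv_sinhMode_space]
  rw [coshMode_add_ofReal_mul]
  congr 1
  linear_combination (-c) * hμ + ω ^ 2 * c * Complex.I_sq

end Modes

end KelvinVoigt

open KelvinVoigt

theorem kelvin_voigt_trajectory_generation_general
    (a ω d D : ℝ) (hω : 0 < ω) (hd : 0 ≤ d)
    (bbar bhat : ℝ)
    (hbbar : bbar = ω * Real.sqrt ((Real.sqrt (1 + ω ^ 2 * d ^ 2) + 1) /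
      (2 * (1 + ω ^ 2 * d ^ 2))))
    (hbhat : bhat = ω * Real.sqrt ((Real.sqrt (1 + ω ^ 2 * d ^ 2) - 1) /
      (2 * (1 + ω ^ 2 * d ^ 2))))
    (β : ℝ → ℝ → ℝ)
    (hβ : ∀ x t, β x t = (a / 2) *
      (Real.exp (bhat * x) * Real.sin (ω * t + bbar * x) +
       Real.exp (-(bhat * x)) * Real.sin (ω * t - bbar * x))) :
    (∀ x ∈ Set.Icc (0 : ℝ) D, ∀ t : ℝ, 0 ≤ t →
        deriv (fun τ => deriv (fun τ' => β x τ') τ) t =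
          deriv (fun ξ => deriv (fun ξ' => β ξ' t) ξ) x +
          d * deriv (fun τ => deriv (fun ξ => deriv (fun ξ' => β ξ' τ) ξ) x) t) ∧
    (∀ t : ℝ, 0 ≤ t → deriv (fun ξ => β ξ t) 0 = 0) ∧
    (∀ t : ℝ, 0 ≤ t → β 0 t = a * Real.sin (ω * t)) := by
  obtain rfl : bbar = betaBar ω d := hbbar
  obtain rfl : bhat = betaHat ω d := hbhat
  have hβ_mode : β = coshMode ω (wavenumber ω d) (-(a * I)) :=
    funext₂ fun x t => (hβ x t).trans (coshMode_eq_exp_mul_sin ω a _ _ x t).symm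
  refine ⟨fun x _ t _ => ?_, fun t _ => ?_, fun t _ => ?_⟩
  · rw [hβ_mode]
    exact coshMode_kelvinVoigt (wavenumber_sq_mul (mul_nonneg hω.le hd)) _ x t
  · rw [hβ_mode, deriv_coshMode_space, sinhMode_zero]
  · rw [hβ 0 t]
    simp only [mul_zero, neg_zero, Real.exp_zero, add_zero, sub_zero, one_mul]
    ring

/-- The motion-planning signal
`βʳ(x,t) = (a/2)[e^{β̂x} sin(ωt+β̄x) + e^{-β̂x} sin(ωt-β̄x)]`, with
`β̄ = ω√((√(1+ω²d²)+1)/(2(1+ω²d²)))` and `β̂ = ω√((√(1+ω²d²)-1)/(2(1+ω²d²)))`,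
satisfies the Kelvin–Voigt damped wave equation `∂_{tt}β = ∂_{xx}β + d ∂_{xxt}β`
on `[0,D] × ℝ₊`, with `∂_x β(0,t) = 0` and `β(0,t) = a sin(ωt)`. -/
theorem kelvin_voigt_trajectory_generation
    (a ω d D : ℝ) (ha : 0 < a) (hω : 0 < ω) (hd : 0 ≤ d) (hD : 0 < D)
    (bbar bhat : ℝ)
    (hbbar : bbar = ω * Real.sqrt ((Real.sqrt (1 + ω ^ 2 * d ^ 2) + 1) /
      (2 * (1 + ω ^ 2 * d ^ 2))))
    (hbhat : bhat = ω * Real.sqrt ((Real.sqrt (1 + ω ^ 2 * d ^ 2) - 1) /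
      (2 * (1 + ω ^ 2 * d ^ 2))))
    (β : ℝ → ℝ → ℝ)
    (hβ : ∀ x t, β x t = (a / 2) *
      (Real.exp (bhat * x) * Real.sin (ω * t + bbar * x) +
       Real.exp (-(bhat * x)) * Real.sin (ω * t - bbar * x))) :
    (∀ x ∈ Set.Icc (0 : ℝ) D, ∀ t : ℝ, 0 ≤ t →
        deriv (fun τ => deriv (fun τ' => β x τ') τ) t =
          deriv (fun ξ => deriv (fun ξ' => β ξ' t) ξ) x +
          d * deriv (fun τ => deriv (fun ξ => deriv (fun ξ' => β ξ' τ) ξ) x) t) ∧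
    (∀ t : ℝ, 0 ≤ t → deriv (fun ξ => β ξ t) 0 = 0) ∧
    (∀ t : ℝ, 0 ≤ t → β 0 t = a * Real.sin (ω * t)) :=
  kelvin_voigt_trajectory_generation_general a ω d D hω hd bbar bhat hbbar hbhat β hβ
end

section
/- Suppose u^av solves the 1-D heat equation ∂_t u^av(x,t) = D⁻² ∂_{xx} u^av(x,t) on (0,1) with ∂_x u^av(0,t) = 0, u^av(1,t) = U^av(t), and Ĝ^av satisfies d/dt Ĝ^av(t) = H u^av(0,t). Then the transformed variable Ḡ^av(t) = Ĝ^av(t) + H ∫₀¹ D²(1−ξ) u^av(ξ,t) dξ satisfies d/dt Ḡ^av(t) = H U^av(t). -/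
/-!
Differentiating under the integral sign and using the heat equation, the weight `D²` cancels
`D⁻²` and the time derivative of `∫₀¹ D²(1 - ξ) u(ξ,t) dξ` is `∫₀¹ (1 - ξ) ∂ₓₓu(ξ,t) dξ`.
By Taylor's formula with integral remainder this equals
`u(1,t) - u(0,t) - ∂ₓu(0,t) = Uᵃᵛ(t) - u(0,t)`, so the term `H u(0,t)` in `d/dt Ĝᵃᵛ` cancels.
-/

open Set MeasureTheory intervalIntegral

theorem taylor_integral_remainder_first_order {f f' f'' : ℝ → ℝ} {a b : ℝ}
    (hf : ∀ x ∈ uIcc a b, HasDerivAt f (f' x) x)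
    (hf' : ∀ x ∈ uIcc a b, HasDerivAt f' (f'' x) x)
    (hf'' : IntervalIntegrable f'' volume a b) :
    ∫ x in a..b, (b - x) * f'' x = f b - f a - (b - a) * f' a := by
  have hf'_int : IntervalIntegrable f' volume a b :=
    ContinuousOn.intervalIntegrable fun x hx => (hf' x hx).continuousAt.continuousWithinAt
  have hftc : ∫ x in a..b, f' x = f b - f a := integral_eq_sub_of_hasDerivAt hf hf'_int
  rw [integral_mul_deriv_eq_deriv_mul (u := fun x => b - x)
    (fun x _ => (hasDerivAt_id' x).const_sub b) hf' intervalIntegrable_const hf'']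
  simp only [neg_one_mul, intervalIntegral.integral_neg, hftc]
  ring

theorem hasDerivAt_intervalIntegral_of_continuous_deriv {E : Type*} [NormedAddCommGroup E]
    [NormedSpace ℝ E] {F F' : ℝ → ℝ → E} {a b t : ℝ}
    (hF : ∀ s, ContinuousOn (F s) (uIcc a b))
    (hF' : Continuous (Function.uncurry F'))
    (hderiv : ∀ s, ∀ ξ ∈ uIcc a b, HasDerivAt (fun s => F s ξ) (F' s ξ) s) :
    HasDerivAt (fun s => ∫ ξ in a..b, F s ξ) (∫ ξ in a..b, F' t ξ) t := by
  obtain ⟨M, hM⟩ :=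
    (isCompact_closedBall t 1 |>.prod isCompact_uIcc).exists_bound_of_continuousOn hF'.continuousOn
  have hmeas : ∀ s, AEStronglyMeasurable (F s) (volume.restrict (uIoc a b)) := fun s =>
    ((hF s).mono uIoc_subset_uIcc).aestronglyMeasurable measurableSet_uIoc
  refine (hasDerivAt_integral_of_dominated_loc_of_deriv_le (bound := fun _ => M)
    (Metric.closedBall_mem_nhds t one_pos) (.of_forall hmeas) ((hF t).intervalIntegrable)
    ((hF'.comp (Continuous.prodMk_right t)).aestronglyMeasurable) ?_ intervalIntegrable_const ?_).2
  · exact .of_forall fun ξ hξ s hs => hM (s, ξ) ⟨hs, uIoc_subset_uIcc hξ⟩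
  · exact .of_forall fun ξ hξ s _ => hderiv s ξ (uIoc_subset_uIcc hξ)

theorem heat_reduction_transformation_general
    (D H : ℝ) (hD : 0 < D)
    (u ux uxx : ℝ → ℝ → ℝ) (Uav Ghat : ℝ → ℝ)
    (hcuxx : Continuous fun p : ℝ × ℝ => uxx p.1 p.2)
    (hux : ∀ x t, HasDerivAt (fun ξ => u ξ t) (ux x t) x)
    (huxx : ∀ x t, HasDerivAt (fun ξ => ux ξ t) (uxx x t) x)
    (hheat : ∀ t, ∀ x ∈ Set.Icc (0 : ℝ) 1,
      HasDerivAt (fun τ => u x τ) ((D ^ 2)⁻¹ * uxx x t) t)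
    (hbc0 : ∀ t, ux 0 t = 0)
    (hbc1 : ∀ t, u 1 t = Uav t)
    (hG : ∀ t, HasDerivAt Ghat (H * u 0 t) t) :
    ∀ t, HasDerivAt
      (fun s => Ghat s + H * ∫ ξ in (0 : ℝ)..(1 : ℝ), D ^ 2 * (1 - ξ) * u ξ s)
      (H * Uav t) t := by
  intro t
  have hweighted_heat : ∀ s, ∀ ξ ∈ uIcc (0 : ℝ) 1,
      HasDerivAt (fun τ => D ^ 2 * (1 - ξ) * u ξ τ) ((1 - ξ) * uxx ξ s) s := by
    intro s ξ hξ
    rw [uIcc_of_le zero_le_one] at hξ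
    exact ((hheat s ξ hξ).const_mul (D ^ 2 * (1 - ξ))).congr_deriv (by field_simp)
  have hu_cont : ∀ s, Continuous (fun ξ => u ξ s) := fun s =>
    continuous_iff_continuousAt.2 fun x => (hux x s).continuousAt
  have hmoment : HasDerivAt (fun s => ∫ ξ in (0 : ℝ)..1, D ^ 2 * (1 - ξ) * u ξ s)
      (∫ ξ in (0 : ℝ)..1, (1 - ξ) * uxx ξ t) t :=
    hasDerivAt_intervalIntegral_of_continuous_deriv
      (F' := fun s ξ => (1 - ξ) * uxx ξ s) (fun s => by fun_prop)
      ((continuous_const.sub continuous_snd).mul (hcuxx.comp continuous_swap)) hweighted_heat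
  have hremainder :
      ∫ ξ in (0 : ℝ)..1, (1 - ξ) * uxx ξ t = u 1 t - u 0 t - (1 - 0) * ux 0 t :=
    taylor_integral_remainder_first_order (fun x _ => hux x t) (fun x _ => huxx x t)
      ((hcuxx.comp (.prodMk_left t)).intervalIntegrable 0 1)
  refine ((hG t).add (hmoment.const_mul H)).congr_deriv ?_
  rw [hremainder, hbc0, hbc1]
  ring

/-- Reduction transformation for the heat-PDE case (scalar `N = 1`):
if `uᵃᵛ` solves `∂_t u = D⁻² ∂_{xx} u` on `(0,1)` with `∂_x u(0,t) = 0`,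
`u(1,t) = Uᵃᵛ(t)`, and `d/dt Ĝᵃᵛ(t) = H u(0,t)`, then
`Ḡᵃᵛ(t) = Ĝᵃᵛ(t) + H ∫₀¹ D²(1-ξ) u(ξ,t) dξ` satisfies `d/dt Ḡᵃᵛ(t) = H Uᵃᵛ(t)`. -/
theorem heat_reduction_transformation
    (D H : ℝ) (hD : 0 < D)
    (u ux uxx : ℝ → ℝ → ℝ) (Uav Ghat : ℝ → ℝ)
    (hcu : Continuous fun p : ℝ × ℝ => u p.1 p.2)
    (hcux : Continuous fun p : ℝ × ℝ => ux p.1 p.2)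
    (hcuxx : Continuous fun p : ℝ × ℝ => uxx p.1 p.2)
    (hux : ∀ x t, HasDerivAt (fun ξ => u ξ t) (ux x t) x)
    (huxx : ∀ x t, HasDerivAt (fun ξ => ux ξ t) (uxx x t) x)
    (hheat : ∀ t, ∀ x ∈ Set.Icc (0 : ℝ) 1,
      HasDerivAt (fun τ => u x τ) ((D ^ 2)⁻¹ * uxx x t) t)
    (hbc0 : ∀ t, ux 0 t = 0)
    (hbc1 : ∀ t, u 1 t = Uav t)
    (hG : ∀ t, HasDerivAt Ghat (H * u 0 t) t) :
    ∀ t, HasDerivAt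
      (fun s => Ghat s + H * ∫ ξ in (0 : ℝ)..(1 : ℝ), D ^ 2 * (1 - ξ) * u ξ s)
      (H * Uav t) t :=
  heat_reduction_transformation_general D H hD u ux uxx Uav Ghat hcuxx hux huxx hheat hbc0 hbc1 hG
end

section
/- Let N(t) = (16/a²)(sin²(ωt) − 1/2) and y(t) = y* + (H/2)(a sin(ωt) + v)², where v ∈ ℝ is fixed. Then the average of N(t)y(t) over one period 2π/ω equals H; i.e., the demodulation signal N recovers the Hessian in the average sense. -/
open Real intervalIntegral

/-- The demodulation signal `N(t) = (16/a²)(sin²(ωt) - 1/2)` recovers the Hessian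
in the average sense: for `y(t) = y* + (H/2)(a sin(ωt) + v)²`, the average of
`N(t)y(t)` over one period equals `H`. -/
theorem hessian_demodulation_average
    (a ω H ys v : ℝ) (ha : 0 < a) (hω : 0 < ω) :
    (ω / (2 * Real.pi)) * ∫ t in (0 : ℝ)..(2 * Real.pi / ω),
        (16 / a ^ 2) * (Real.sin (ω * t) ^ 2 - 1 / 2) *
          (ys + (H / 2) * (a * Real.sin (ω * t) + v) ^ 2)
      = H := by
  have hπ := Real.pi_pos
  have ha2 : a ^ 2 ≠ 0 := pow_ne_zero _ ha.ne'
  set f : ℝ → ℝ := fun x =>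
    (16 / a ^ 2) * (Real.sin x ^ 2 - 1 / 2) * (ys + (H / 2) * (a * Real.sin x + v) ^ 2)
    with hf
  have hb : ω * (2 * Real.pi / ω) = 2 * Real.pi := by field_simp
  have hcomp : (∫ t in (0 : ℝ)..(2 * Real.pi / ω), f (ω * t))
      = ω⁻¹ • ∫ x in (0 : ℝ)..(2 * Real.pi), f x := by
    rw [integral_comp_mul_left f hω.ne', mul_zero, hb]
  -- basic integrals over one period
  have I1 : (∫ x in (0 : ℝ)..(2 * Real.pi), Real.sin x) = 0 := by
    simp [integral_sin, Real.cos_two_pi]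
  have I2 : (∫ x in (0 : ℝ)..(2 * Real.pi), Real.sin x ^ 2) = Real.pi := by
    simp [Real.sin_two_pi]
  have I3 : (∫ x in (0 : ℝ)..(2 * Real.pi), Real.sin x ^ 3) = 0 := by
    have h := integral_sin_pow 1 (a := (0:ℝ)) (b := 2 * Real.pi)
    simp only [Real.sin_two_pi, Real.sin_zero] at h
    simp only [pow_one] at h
    rw [h, I1]; norm_num
  have I4 : (∫ x in (0 : ℝ)..(2 * Real.pi), Real.sin x ^ 4) = 3 * Real.pi / 4 := by
    have h := integral_sin_pow 2 (a := (0:ℝ)) (b := 2 * Real.pi)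
    simp only [Real.sin_two_pi, Real.sin_zero] at h
    rw [show ((2:ℕ) + 2) = 4 from rfl] at h
    rw [h, I2]; push_cast; ring
  -- expand f as a polynomial in sin x
  have hexp : ∀ x : ℝ, f x =
      (16 / a ^ 2) * (-(1:ℝ)/2) * (ys + (H/2) * v^2)
      + ((16 / a ^ 2) * (-(1:ℝ)/2) * (H * a * v)) * Real.sin x
      + ((16 / a ^ 2) * ((ys + (H/2)*v^2) - (H/2) * a^2 / 2)) * Real.sin x ^ 2
      + ((16 / a ^ 2) * (H * a * v)) * Real.sin x ^ 3
      + ((16 / a ^ 2) * ((H/2) * a^2)) * Real.sin x ^ 4 := by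
    intro x; simp only [hf]; ring
  have hi : ∀ c : ℝ, ∀ n : ℕ, IntervalIntegrable (fun x => c * Real.sin x ^ n)
      MeasureTheory.volume (0 : ℝ) (2 * Real.pi) := fun c n =>
    (continuous_const.mul (continuous_sin.pow n)).intervalIntegrable _ _
  have hi1 : ∀ c : ℝ, IntervalIntegrable (fun x => c * Real.sin x)
      MeasureTheory.volume (0 : ℝ) (2 * Real.pi) := fun c =>
    (continuous_const.mul continuous_sin).intervalIntegrable _ _
  have hc : IntervalIntegrable (fun _ : ℝ => (16 / a ^ 2) * (-(1:ℝ)/2) * (ys + (H/2) * v^2))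
      MeasureTheory.volume (0 : ℝ) (2 * Real.pi) := intervalIntegrable_const
  have hJ : (∫ x in (0 : ℝ)..(2 * Real.pi), f x)
      = (16 / a ^ 2) * (-(1:ℝ)/2) * (ys + (H/2) * v^2) * (2 * Real.pi)
      + ((16 / a ^ 2) * ((ys + (H/2)*v^2) - (H/2) * a^2 / 2)) * Real.pi
      + ((16 / a ^ 2) * ((H/2) * a^2)) * (3 * Real.pi / 4) := by
    rw [intervalIntegral.integral_congr (g := fun x =>
      (16 / a ^ 2) * (-(1:ℝ)/2) * (ys + (H/2) * v^2)
      + ((16 / a ^ 2) * (-(1:ℝ)/2) * (H * a * v)) * Real.sin x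
      + ((16 / a ^ 2) * ((ys + (H/2)*v^2) - (H/2) * a^2 / 2)) * Real.sin x ^ 2
      + ((16 / a ^ 2) * (H * a * v)) * Real.sin x ^ 3
      + ((16 / a ^ 2) * ((H/2) * a^2)) * Real.sin x ^ 4) (fun x _ => hexp x)]
    rw [intervalIntegral.integral_add (((hc.add (hi1 _)).add (hi _ 2)).add (hi _ 3)) (hi _ 4),
        intervalIntegral.integral_add ((hc.add (hi1 _)).add (hi _ 2)) (hi _ 3),
        intervalIntegral.integral_add (hc.add (hi1 _)) (hi _ 2),
        intervalIntegral.integral_add hc (hi1 _),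
        intervalIntegral.integral_const, intervalIntegral.integral_const_mul,
        intervalIntegral.integral_const_mul, intervalIntegral.integral_const_mul,
        intervalIntegral.integral_const_mul]
    rw [show (∫ x in (0:ℝ)..(2*Real.pi), Real.sin x) = 0 from I1,
        show (∫ x in (0:ℝ)..(2*Real.pi), Real.sin x ^ 2) = Real.pi from I2,
        show (∫ x in (0:ℝ)..(2*Real.pi), Real.sin x ^ 3) = 0 from I3,
        show (∫ x in (0:ℝ)..(2*Real.pi), Real.sin x ^ 4) = 3 * Real.pi / 4 from I4]
    simp [smul_eq_mul]; ring
  show (ω / (2 * Real.pi)) * ∫ t in (0 : ℝ)..(2 * Real.pi / ω), f (ω * t) = H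
  rw [hcomp, hJ, smul_eq_mul]
  field_simp
  ring
end
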